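/- Let (X, μ) be a measure space, N a positive integer, and f_1, …, f_N : X → ℂ measurable functions forming an orthonormal family in L²(X, μ). Let K(x, y) := ∑_{j=1}^N f_j(x) · conj(f_j(y)) and let ν_N be the determinantal point process on X^N with density (1/N!) |det (f_j(x_i))_{i,j=1}^N|² with respect to μ^{⊗N}. Then for every bounded measurable g : X → ℝ, the variance of the linear statistic N[g](x_1, …, x_N) = ∑_{i=1}^N g(x_i) with respect to ν_N satisfies Var[N[g]] = (1/2) ∫_X ∫_X |K(x, y)|² · (g(x) − g(y))² dμ(x) dμ(y), i.e. ∫_{X^N} (∑_i g(x_i))² dν_N − (∫_{X^N} ∑_i g(x_i) dν_N)² equals the right-hand side. -/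

import Mathlib

/-!
Expanding both determinants and integrating coordinate by coordinate gives a weighted form of
Andréief's identity: `∫ ∏ₖ uₖ(xₖ) |det (f_j(x_i))|² dμ^N = ∑_π det M_π`, where the `r`-th column
of `M_π` is the `r`-th column of the Gram matrix `(⟨u_{π r} f_j, f_l⟩)_{j,l}`. By orthonormality
this Gram matrix is the identity when `u = 1`, so taking `u = g` in one or two coordinates leaves
a determinant with at most two non-trivial columns. Writing `G = (⟨g f_j, f_l⟩)` and
`G₂ = (⟨g² f_j, f_l⟩)`, this gives `E N[g] = tr G` and `E N[g]² = tr G₂ + (tr G)² - tr G²`.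
Expanding `|K(x, y)|²` into products of a function of `x` and a function of `y`, the double
integral is `2 (tr G₂ - tr G²)`.

Fubini on `X^N` needs `μ` to be σ-finite. The `f_j` are in `L²`, so they vanish outside a set
`S` on which `μ` is σ-finite, and replacing `μ` by `μ.restrict S` changes neither `ν` nor the
Gram matrices.
-/

open MeasureTheory Complex
open scoped ComplexConjugate

namespace Equiv.Perm

variable {ι : Type*} [DecidableEq ι]

theorem eq_one_or_eq_swap_of_forall_apply_eq_self {π : Perm ι} {a b : ι}
    (h : ∀ k, k ≠ a → k ≠ b → π k = k) : π = 1 ∨ π = swap a b := by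
  have hab : ∀ k, k = a ∨ k = b → π k = a ∨ π k = b := by
    intro k hk
    by_contra! hne
    have := π.injective (h _ hne.1 hne.2)
    grind
  by_cases ha : π a = a
  · left
    ext k
    by_cases hka : k = a
    · simp [hka, ha]
    by_cases hkb : k = b
    · subst hkb
      simpa using (hab k (Or.inr rfl)).resolve_left fun hk => hka (π.injective (hk.trans ha.symm))
    · simpa using h k hka hkb
  · right
    have ha' : π a = b := (hab a (Or.inl rfl)).resolve_left ha
    have hb' : π b = a := (hab b (Or.inr rfl)).resolve_right fun hb =>
      ha (ha'.trans (π.injective (ha'.trans hb.symm)).symm)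
    ext k
    by_cases hka : k = a
    · simp [hka, ha']
    by_cases hkb : k = b
    · simp [hkb, hb']
    · rw [swap_apply_of_ne_of_ne hka hkb, h k hka hkb]

end Equiv.Perm

namespace Matrix

variable {ι R : Type*} [Fintype ι] [DecidableEq ι] [CommRing R]

theorem det_updateCol_one (j : ι) (v : ι → R) : (updateCol 1 j v).det = v j := by
  simpa [one_apply] using det_updateCol_sum (1 : Matrix ι ι R) j v

theorem det_updateCol_updateCol_one {i j : ι} (hij : i ≠ j) (v w : ι → R) :
    (updateCol (updateCol 1 i v) j w).det = v i * w j - v j * w i := by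
  set M := updateCol (updateCol 1 i v) j w
  have hM : ∀ k l, l ≠ i → l ≠ j → M k l = if k = l then 1 else 0 := by
    intro k l hi hj
    simp [M, hi, hj, one_apply]
  rw [det_apply', ← Finset.sum_subset (Finset.subset_univ {1, Equiv.swap i j}) ?_,
    Finset.sum_pair ?_]
  · rw [Finset.prod_eq_mul i j hij (fun k _ hk => by simp [hM k k hk.1 hk.2]) (by simp) (by simp),
      Finset.prod_eq_mul i j hij ?_ (by simp) (by simp)]
    · simp only [M, Equiv.Perm.sign_one, Units.val_one, Int.cast_one, Equiv.Perm.coe_one, id_eq,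
        ne_eq, hij, not_false_eq_true, updateCol_ne, updateCol_self, one_mul,
        Equiv.Perm.sign_swap hij, Units.val_neg, Int.cast_neg, Equiv.swap_apply_left,
        Equiv.swap_apply_right, neg_mul]
      ring
    · intro k _ hk
      simp [Equiv.swap_apply_of_ne_of_ne hk.1 hk.2, hM k k hk.1 hk.2]
  · exact fun h => hij (by simpa using congrArg (· i) h)
  · intro π _ hπ
    simp only [Finset.mem_insert, Finset.mem_singleton, not_or] at hπ
    obtain ⟨k, hki, hkj, hk⟩ : ∃ k, k ≠ i ∧ k ≠ j ∧ π k ≠ k := by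
      by_contra! hfix
      exact (Equiv.Perm.eq_one_or_eq_swap_of_forall_apply_eq_self hfix).elim hπ.1 hπ.2
    rw [Finset.prod_eq_zero (Finset.mem_univ k) (by simp [hM _ _ hki hkj, hk]), mul_zero]

theorem det_of_eq_sum_sign_mul_prod (A : ι → ι → R) :
    (of A).det = ∑ σ : Equiv.Perm ι, (Equiv.Perm.sign σ : R) * ∏ i, A i (σ i) := by
  rw [← det_transpose, det_apply']
  rfl

theorem sum_sign_mul_det_of_eq_sum_det (W : ι → Matrix ι ι R) :
    ∑ τ : Equiv.Perm ι, (Equiv.Perm.sign τ : R) * (Matrix.of fun i j => W i j (τ i)).det =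
      ∑ π : Equiv.Perm ι, (Matrix.of fun j r => W (π r) j r).det := by
  rw [← Equiv.sum_comp (Equiv.inv _) fun π : Equiv.Perm ι => (Matrix.of fun j r => W (π r) j r).det]
  refine Finset.sum_congr rfl fun τ _ => ?_
  have h : (Matrix.of fun i j => W i j (τ i)).transpose =
      (Matrix.of fun j r => W (τ⁻¹ r) j r).submatrix id τ := by
    ext j i
    simp
  rw [← det_transpose, h, det_permute', ← mul_assoc, ← Int.cast_mul,
    ← Units.val_mul, Int.units_mul_self, Units.val_one, Int.cast_one, one_mul]
  rfl

end Matrix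

namespace Finset

variable {ι : Type*} [Fintype ι] [DecidableEq ι]

theorem sum_sum_perm_inv_apply {R : Type*} [Semiring R] (F : ι → R) :
    ∑ a, ∑ π : Equiv.Perm ι, F (π⁻¹ a) = ((Fintype.card ι).factorial : R) * ∑ a, F a := by
  rw [sum_comm]
  simp [Equiv.sum_comp, card_univ, Fintype.card_perm]

theorem sum_sum_sum_perm_inv_apply {R : Type*} [Semiring R] (F : ι → ι → R) :
    ∑ a, ∑ b, ∑ π : Equiv.Perm ι, F (π⁻¹ a) (π⁻¹ b) =
      ((Fintype.card ι).factorial : R) * ∑ a, ∑ b, F a b := by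
  calc ∑ a, ∑ b, ∑ π : Equiv.Perm ι, F (π⁻¹ a) (π⁻¹ b)
      = ∑ π : Equiv.Perm ι, ∑ a, ∑ b, F (π⁻¹ a) (π⁻¹ b) :=
        (sum_congr rfl fun _ _ => sum_comm).trans sum_comm
    _ = ∑ _π : Equiv.Perm ι, ∑ a, ∑ b, F a b := sum_congr rfl fun π _ => by
      simp only [Equiv.sum_comp π⁻¹ (F (π⁻¹ _)), Equiv.sum_comp π⁻¹ fun a => ∑ b, F a b]
    _ = ((Fintype.card ι).factorial : R) * ∑ a, ∑ b, F a b := by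
      simp [card_univ, Fintype.card_perm]

end Finset

namespace MeasureTheory.Measure

variable {ι : Type*} [Fintype ι] {α : ι → Type*} [∀ i, MeasurableSpace (α i)]

theorem restrict_univ_pi_pi_restrict (μ : ∀ i, Measure (α i)) {s : ∀ i, Set (α i)}
    (hs : ∀ i, MeasurableSet (s i)) :
    (Measure.pi μ).restrict (Set.univ.pi s) =
      (Measure.pi fun i => (μ i).restrict (s i)).restrict (Set.univ.pi s) := by
  set m := fun i => (μ i).toOuterMeasure
  set m' := fun i => ((μ i).restrict (s i)).toOuterMeasure
  have hm' : ∀ i t, m' i t = m i (t ∩ s i) := fun i t => restrict_apply' (hs i)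
  have hle : OuterMeasure.pi m' ≤ OuterMeasure.pi m :=
    OuterMeasure.le_pi.2 fun t _ => (OuterMeasure.pi_pi_le _ t).trans <|
      Finset.prod_le_prod' fun i _ => by rw [hm']; exact measure_mono Set.inter_subset_left
  have hge : OuterMeasure.restrict (Set.univ.pi s) (OuterMeasure.pi m) ≤ OuterMeasure.pi m' :=
    OuterMeasure.le_pi.2 fun t _ => by
      rw [OuterMeasure.restrict_apply, ← Set.pi_inter_distrib]
      exact (OuterMeasure.pi_pi_le _ _).trans_eq (by simp only [hm'])
  ext A hA
  have hAs := hA.inter (MeasurableSet.univ_pi hs)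
  rw [restrict_apply hA, restrict_apply hA, Measure.pi_def, Measure.pi_def,
    toMeasure_apply _ _ hAs, toMeasure_apply _ _ hAs]
  refine le_antisymm ?_ (hle _)
  calc OuterMeasure.pi m (A ∩ Set.univ.pi s)
      = OuterMeasure.restrict (Set.univ.pi s) (OuterMeasure.pi m) (A ∩ Set.univ.pi s) := by
        rw [OuterMeasure.restrict_apply, Set.inter_assoc, Set.inter_self]
    _ ≤ _ := hge _

end MeasureTheory.Measure

section

variable {X : Type*} [MeasurableSpace X] {μ : Measure X}

theorem exists_sigmaFinite_restrict_forall_notMem_eq_zero {κ E : Type*} [Finite κ]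
    [NormedAddCommGroup E] {p : ENNReal} {f : κ → X → E} (hfm : ∀ j, StronglyMeasurable (f j))
    (hf : ∀ j, MemLp (f j) p μ) (hp0 : p ≠ 0) (hptop : p ≠ ⊤) :
    ∃ S, MeasurableSet S ∧ SigmaFinite (μ.restrict S) ∧ ∀ j, ∀ x ∉ S, f j x = 0 := by
  choose t ht hft hσ using fun j =>
    ((hf j).finStronglyMeasurable_of_stronglyMeasurable (hfm j) hp0 hptop).exists_set_sigmaFinite
  refine ⟨⋃ j, t j, MeasurableSet.iUnion ht,
    Measure.sigmaFinite_of_le _ Measure.restrict_iUnion_le,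
    fun j x hx => hft j x fun hxt => hx (Set.mem_iUnion_of_mem j hxt)⟩

theorem integral_integral_sum_mul {𝕜 κ : Type*} [RCLike 𝕜] (s : Finset κ) {A B : κ → X → 𝕜}
    (hA : ∀ p ∈ s, Integrable (A p) μ) (hB : ∀ p ∈ s, Integrable (B p) μ) :
    ∫ x, ∫ y, ∑ p ∈ s, A p x * B p y ∂μ ∂μ = ∑ p ∈ s, (∫ x, A p x ∂μ) * ∫ y, B p y ∂μ := by
  have hinner : ∀ x, ∫ y, ∑ p ∈ s, A p x * B p y ∂μ = ∑ p ∈ s, A p x * ∫ y, B p y ∂μ :=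
    fun x => by
      rw [integral_finsetSum s fun p hp => (hB p hp).const_mul _]
      simp only [integral_const_mul]
  simp only [hinner]
  rw [integral_finsetSum s fun p hp => (hA p hp).mul_const _]
  simp only [integral_mul_const]

theorem integrable_mul_mul_conj {w φ ψ : X → ℂ} {c : ℝ} (hw : AEStronglyMeasurable w μ)
    (hwc : ∀ y, ‖w y‖ ≤ c) (hφ : MemLp φ 2 μ) (hψ : MemLp ψ 2 μ) :
    Integrable (fun y => w y * (φ y * conj (ψ y))) μ :=
  (hφ.integrable_mul hψ.star).bdd_mul hw (ae_of_all _ hwc)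

end

section

variable {ι X : Type*}

theorem normSq_sum_mul_conj_eq_sum [Fintype ι] (f : ι → X → ℂ) (x y : X) :
    ((‖∑ j, f j x * conj (f j y)‖ ^ 2 : ℝ) : ℂ) =
      ∑ j, ∑ l, (f j x * conj (f l x)) * (f l y * conj (f j y)) := by
  rw [Complex.ofReal_pow, ← Complex.mul_conj', map_sum, Finset.sum_mul_sum]
  refine Finset.sum_congr rfl fun j _ => Finset.sum_congr rfl fun l _ => ?_
  simp only [map_mul, Complex.conj_conj]
  ring

theorem prod_mul_det_mul_conj_eq_sum [Fintype ι] [DecidableEq ι] (f u : ι → X → ℂ) (x : ι → X) :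
    (∏ k, u k (x k)) * ((Matrix.of fun i j => f j (x i)).det *
        conj (Matrix.of fun i j => f j (x i)).det) =
      ∑ τ : Equiv.Perm ι, (Equiv.Perm.sign τ : ℂ) *
        (Matrix.of fun i j => u i (x i) * (f j (x i) * conj (f (τ i) (x i)))).det := by
  have hconj : conj (Matrix.of fun i j => f j (x i)).det =
      ∑ τ : Equiv.Perm ι, (Equiv.Perm.sign τ : ℂ) * ∏ i, conj (f (τ i) (x i)) := by
    simp [Matrix.det_of_eq_sum_sign_mul_prod, map_prod]
  rw [hconj, Finset.mul_sum, Finset.mul_sum]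
  refine Finset.sum_congr rfl fun τ _ => ?_
  have h : (Matrix.of fun i j => u i (x i) * (f j (x i) * conj (f (τ i) (x i)))).det =
      (∏ i, u i (x i) * conj (f (τ i) (x i))) * (Matrix.of fun i j => f j (x i)).det := by
    rw [← Matrix.det_mul_column]
    congr 1
    ext i j
    simp only [Matrix.of_apply]
    ring
  rw [h, Finset.prod_mul_distrib]
  ring

def pairWeight [DecidableEq ι] (φ ψ : X → ℂ) (a b k : ι) : X → ℂ :=
  fun y => (if k = a then φ y else 1) * (if k = b then ψ y else 1)

theorem norm_pairWeight_le [DecidableEq ι] {φ ψ : X → ℂ} {c : ℝ} (hφc : ∀ y, ‖φ y‖ ≤ c)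
    (hψc : ∀ y, ‖ψ y‖ ≤ c) (a b k : ι) (y : X) : ‖pairWeight φ ψ a b k y‖ ≤ max c 1 * max c 1 := by
  simp only [pairWeight, norm_mul]
  gcongr <;> split_ifs <;> simp [hφc, hψc]

theorem prod_pairWeight [Fintype ι] [DecidableEq ι] (φ ψ : X → ℂ) (a b : ι) (x : ι → X) :
    ∏ k, pairWeight φ ψ a b k (x k) = φ (x a) * ψ (x b) := by
  simp only [pairWeight, Finset.prod_mul_distrib, Finset.prod_ite_eq', Finset.mem_univ, if_true]

variable [MeasurableSpace X] {μ : Measure X}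

noncomputable def weightedGram (μ : Measure X) (f : ι → X → ℂ) (w : X → ℂ) : Matrix ι ι ℂ :=
  Matrix.of fun j l => ∫ y, w y * (f j y * conj (f l y)) ∂μ

theorem weightedGram_const_mul (f : ι → X → ℂ) (a : ℂ) (w : X → ℂ) :
    weightedGram μ f (fun y => a * w y) = a • weightedGram μ f w := by
  ext j l
  simp [weightedGram, mul_assoc, integral_const_mul]

theorem weightedGram_restrict {f : ι → X → ℂ} {S : Set X}
    (hfS : ∀ j, ∀ x ∉ S, f j x = 0) (w : X → ℂ) :
    weightedGram (μ.restrict S) f w = weightedGram μ f w := by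
  ext j l
  exact setIntegral_eq_integral_of_forall_compl_eq_zero fun x hx => by simp [hfS j x hx]

theorem aestronglyMeasurable_pairWeight [DecidableEq ι] {φ ψ : X → ℂ}
    (hφ : AEStronglyMeasurable φ μ) (hψ : AEStronglyMeasurable ψ μ) (a b k : ι) :
    AEStronglyMeasurable (pairWeight φ ψ a b k) μ :=
  AEStronglyMeasurable.mul (by by_cases h : k = a <;> simp [h, hφ, aestronglyMeasurable_const])
    (by by_cases h : k = b <;> simp [h, hψ, aestronglyMeasurable_const])

theorem integral_integral_normSq_kernel_mul [Fintype ι] {κ : Type*} [Fintype κ] {f : ι → X → ℂ}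
    (hf : ∀ j, MemLp (f j) 2 μ) {v w : κ → X → ℂ} (hv : ∀ m, AEStronglyMeasurable (v m) μ)
    (hw : ∀ m, AEStronglyMeasurable (w m) μ) (hvc : ∀ m, ∃ c, ∀ y, ‖v m y‖ ≤ c)
    (hwc : ∀ m, ∃ c, ∀ y, ‖w m y‖ ≤ c) :
    ∫ x, ∫ y, ((‖∑ j, f j x * conj (f j y)‖ ^ 2 : ℝ) : ℂ) * ∑ m, v m x * w m y ∂μ ∂μ =
      ∑ m, (weightedGram μ f (v m) * weightedGram μ f (w m)).trace := by
  have hpt : ∀ x y, ((‖∑ j, f j x * conj (f j y)‖ ^ 2 : ℝ) : ℂ) * ∑ m, v m x * w m y =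
      ∑ p : κ × ι × ι, (v p.1 x * (f p.2.1 x * conj (f p.2.2 x))) *
        (w p.1 y * (f p.2.2 y * conj (f p.2.1 y))) := fun x y => by
    simp only [normSq_sum_mul_conj_eq_sum, Fintype.sum_prod_type, Finset.mul_sum, Finset.sum_mul]
    exact Finset.sum_congr rfl fun _ _ => Finset.sum_congr rfl fun _ _ =>
      Finset.sum_congr rfl fun _ _ => by ring
  simp only [hpt]
  rw [integral_integral_sum_mul _
    (fun p _ => have ⟨c, hc⟩ := hvc p.1; integrable_mul_mul_conj (hv p.1) hc (hf _) (hf _))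
    (fun p _ => have ⟨c, hc⟩ := hwc p.1; integrable_mul_mul_conj (hw p.1) hc (hf _) (hf _))]
  simp only [Fintype.sum_prod_type, Matrix.trace, Matrix.diag, Matrix.mul_apply]
  rfl

variable [Fintype ι] [DecidableEq ι]

theorem integral_integral_normSq_kernel_mul_sub_sq {f : ι → X → ℂ} (hf : ∀ j, MemLp (f j) 2 μ)
    (horth : weightedGram μ f (fun _ => 1) = 1) {g : X → ℝ} (hg : Measurable g) {C : ℝ}
    (hgC : ∀ x, |g x| ≤ C) :
    ((∫ x, ∫ y, ‖∑ j, f j x * conj (f j y)‖ ^ 2 * (g x - g y) ^ 2 ∂μ ∂μ : ℝ) : ℂ) =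
      2 * ((weightedGram μ f fun y => (g y : ℂ) * g y).trace -
        (weightedGram μ f (fun y => (g y : ℂ)) * weightedGram μ f fun y => (g y : ℂ)).trace) := by
  set v : Fin 3 → X → ℂ := ![fun x => (g x : ℂ) * g x, fun x => -2 * g x, fun _ => 1]
  set w : Fin 3 → X → ℂ := ![fun _ => 1, fun y => g y, fun y => (g y : ℂ) * g y]
  have hgn : ∀ y, ‖(g y : ℂ)‖ ≤ C := fun y => by simpa using hgC y
  have hv : ∀ m, AEStronglyMeasurable (v m) μ := by
    intro m
    fin_cases m <;> simp only [v, Fin.zero_eta, Fin.mk_one, Fin.reduceFinMk, Fin.isValue,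
      Matrix.cons_val_zero, Matrix.cons_val_one, Matrix.cons_val] <;> fun_prop
  have hw : ∀ m, AEStronglyMeasurable (w m) μ := by
    intro m
    fin_cases m <;> simp only [w, Fin.zero_eta, Fin.mk_one, Fin.reduceFinMk, Fin.isValue,
      Matrix.cons_val_zero, Matrix.cons_val_one, Matrix.cons_val] <;> fun_prop
  have hvc : ∀ m, ∃ c, ∀ y, ‖v m y‖ ≤ c := by
    intro m; fin_cases m
    · exact ⟨C * C, fun y => by simpa [v] using mul_self_le_mul_self (norm_nonneg _) (hgn y)⟩
    · exact ⟨2 * C, fun y => by simpa [v] using mul_le_mul_of_nonneg_left (hgn y) zero_le_two⟩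
    · exact ⟨1, fun y => by simp [v]⟩
  have hwc : ∀ m, ∃ c, ∀ y, ‖w m y‖ ≤ c := by
    intro m; fin_cases m
    · exact ⟨1, fun y => by simp [w]⟩
    · exact ⟨C, fun y => by simpa [w] using hgn y⟩
    · exact ⟨C * C, fun y => by simpa [w] using mul_self_le_mul_self (norm_nonneg _) (hgn y)⟩
  have hpt : ∀ x y, ((‖∑ j, f j x * conj (f j y)‖ ^ 2 * (g x - g y) ^ 2 : ℝ) : ℂ) =
      ((‖∑ j, f j x * conj (f j y)‖ ^ 2 : ℝ) : ℂ) * ∑ m, v m x * w m y := fun x y => by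
    simp only [Fin.sum_univ_three, v, w, Matrix.cons_val_zero, Matrix.cons_val_one,
      Matrix.cons_val_two, Matrix.head_cons, Matrix.tail_cons, Complex.ofReal_mul,
      Complex.ofReal_pow, Complex.ofReal_sub]
    ring
  rw [← integral_complex_ofReal]
  simp only [← integral_complex_ofReal, hpt]
  rw [integral_integral_normSq_kernel_mul hf hv hw hvc hwc]
  simp only [Fin.sum_univ_three, v, w, Matrix.cons_val_zero, Matrix.cons_val_one,
    Matrix.cons_val_two, Matrix.head_cons, Matrix.tail_cons]
  rw [weightedGram_const_mul, horth, Matrix.mul_one, Matrix.one_mul, Matrix.smul_mul,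
    Matrix.trace_smul, smul_eq_mul]
  ring

theorem measurable_det_of_apply {f : ι → X → ℂ} (hf : ∀ j, Measurable (f j)) :
    Measurable fun x : ι → X => (Matrix.of fun i j => f j (x i)).det := by
  simp only [Matrix.det_of_eq_sum_sign_mul_prod]
  fun_prop

theorem integrable_det_of_apply [SigmaFinite μ] {φ : ι → ι → X → ℂ}
    (hφ : ∀ i j, Integrable (φ i j) μ) :
    Integrable (fun x => (Matrix.of fun i j => φ i j (x i)).det) (Measure.pi fun _ => μ) := by
  simp only [Matrix.det_of_eq_sum_sign_mul_prod]
  exact integrable_finsetSum _ fun σ _ =>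
    (Integrable.fintype_prod fun i => hφ i (σ i)).const_mul _

theorem integral_det_of_apply [SigmaFinite μ] {φ : ι → ι → X → ℂ}
    (hφ : ∀ i j, Integrable (φ i j) μ) :
    ∫ x, (Matrix.of fun i j => φ i j (x i)).det ∂(Measure.pi fun _ => μ) =
      (Matrix.of fun i j => ∫ y, φ i j y ∂μ).det := by
  simp only [Matrix.det_of_eq_sum_sign_mul_prod]
  rw [integral_finsetSum _ fun σ _ => (Integrable.fintype_prod fun i => hφ i (σ i)).const_mul _]
  simp only [integral_const_mul, integral_fintype_prod_eq_prod]

theorem integrable_prod_mul_det_mul_conj [SigmaFinite μ] {f : ι → X → ℂ}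
    (hf : ∀ j, MemLp (f j) 2 μ) {u : ι → X → ℂ} (hu : ∀ k, AEStronglyMeasurable (u k) μ) {c : ℝ}
    (hc : ∀ k y, ‖u k y‖ ≤ c) :
    Integrable (fun x => (∏ k, u k (x k)) * ((Matrix.of fun i j => f j (x i)).det *
      conj (Matrix.of fun i j => f j (x i)).det)) (Measure.pi fun _ => μ) := by
  simp only [prod_mul_det_mul_conj_eq_sum]
  exact integrable_finsetSum _ fun τ _ => (integrable_det_of_apply fun i j =>
    integrable_mul_mul_conj (hu i) (hc i) (hf j) (hf (τ i))).const_mul _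

-- Andréief's identity, with a separate weight in each coordinate.
theorem integral_prod_mul_det_mul_conj [SigmaFinite μ] {f : ι → X → ℂ}
    (hf : ∀ j, MemLp (f j) 2 μ) {u : ι → X → ℂ} (hu : ∀ k, AEStronglyMeasurable (u k) μ) {c : ℝ}
    (hc : ∀ k y, ‖u k y‖ ≤ c) :
    ∫ x, (∏ k, u k (x k)) * ((Matrix.of fun i j => f j (x i)).det *
      conj (Matrix.of fun i j => f j (x i)).det) ∂(Measure.pi fun _ => μ) =
      ∑ π : Equiv.Perm ι, (Matrix.of fun j r => weightedGram μ f (u (π r)) j r).det := by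
  have hint : ∀ (τ : Equiv.Perm ι) i j,
      Integrable (fun y => u i y * (f j y * conj (f (τ i) y))) μ := fun τ i j =>
    integrable_mul_mul_conj (hu i) (hc i) (hf j) (hf (τ i))
  simp only [prod_mul_det_mul_conj_eq_sum]
  rw [integral_finsetSum _ fun τ _ => (integrable_det_of_apply (hint τ)).const_mul _]
  simp only [integral_const_mul, integral_det_of_apply (hint _)]
  exact Matrix.sum_sign_mul_det_of_eq_sum_det fun i => weightedGram μ f (u i)

theorem integrable_mul_mul_det_mul_conj [SigmaFinite μ] {f : ι → X → ℂ}
    (hf : ∀ j, MemLp (f j) 2 μ) {φ ψ : X → ℂ}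
    (hφ : AEStronglyMeasurable φ μ) (hψ : AEStronglyMeasurable ψ μ) {c : ℝ}
    (hφc : ∀ y, ‖φ y‖ ≤ c) (hψc : ∀ y, ‖ψ y‖ ≤ c) (a b : ι) :
    Integrable (fun x => φ (x a) * ψ (x b) * ((Matrix.of fun i j => f j (x i)).det *
      conj (Matrix.of fun i j => f j (x i)).det)) (Measure.pi fun _ => μ) := by
  simpa only [prod_pairWeight] using integrable_prod_mul_det_mul_conj hf
    (aestronglyMeasurable_pairWeight hφ hψ a b) (norm_pairWeight_le hφc hψc a b)

/- For `a = b` the `2 × 2` minor vanishes and only the `if` term survives, so one formula covers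
both cases. -/
theorem integral_mul_mul_det_mul_conj [SigmaFinite μ] {f : ι → X → ℂ}
    (hf : ∀ j, MemLp (f j) 2 μ) (horth : weightedGram μ f (fun _ => 1) = 1) {φ ψ : X → ℂ}
    (hφ : AEStronglyMeasurable φ μ) (hψ : AEStronglyMeasurable ψ μ) {c : ℝ}
    (hφc : ∀ y, ‖φ y‖ ≤ c) (hψc : ∀ y, ‖ψ y‖ ≤ c) (a b : ι) :
    ∫ x, φ (x a) * ψ (x b) * ((Matrix.of fun i j => f j (x i)).det *
      conj (Matrix.of fun i j => f j (x i)).det) ∂(Measure.pi fun _ => μ) =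
      ∑ π : Equiv.Perm ι,
        ((if a = b then weightedGram μ f (fun y => φ y * ψ y) (π⁻¹ a) (π⁻¹ a) else 0) +
          (weightedGram μ f φ (π⁻¹ a) (π⁻¹ a) * weightedGram μ f ψ (π⁻¹ b) (π⁻¹ b) -
            weightedGram μ f φ (π⁻¹ b) (π⁻¹ a) * weightedGram μ f ψ (π⁻¹ a) (π⁻¹ b))) := by
  simp only [← prod_pairWeight φ ψ a b]
  rw [integral_prod_mul_det_mul_conj hf (aestronglyMeasurable_pairWeight hφ hψ a b)
    (norm_pairWeight_le hφc hψc a b)]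
  refine Finset.sum_congr rfl fun π _ => ?_
  have hinv : ∀ r c, π r = c ↔ r = π⁻¹ c := fun r c => Equiv.Perm.eq_inv_iff_eq.symm
  rcases eq_or_ne a b with rfl | hab
  · have hM : (Matrix.of fun j r => weightedGram μ f (pairWeight φ ψ a a (π r)) j r) =
        Matrix.updateCol 1 (π⁻¹ a) fun j => weightedGram μ f (fun y => φ y * ψ y) j (π⁻¹ a) := by
      ext j r
      unfold pairWeight
      by_cases hr : π r = a
      · obtain rfl := (hinv r a).1 hr
        simp
      · have hr' : r ≠ π.symm a := fun h => hr (by simp [h])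
        simp [hr, horth, Matrix.updateCol_ne hr']
    rw [hM, Matrix.det_updateCol_one]
    simp
  · have hM : (Matrix.of fun j r => weightedGram μ f (pairWeight φ ψ a b (π r)) j r) =
        Matrix.updateCol (Matrix.updateCol 1 (π⁻¹ a) fun j => weightedGram μ f φ j (π⁻¹ a))
          (π⁻¹ b) fun j => weightedGram μ f ψ j (π⁻¹ b) := by
      ext j r
      unfold pairWeight
      by_cases hra : π r = a
      · obtain rfl := (hinv r a).1 hra
        simp [hab]
      by_cases hrb : π r = b
      · obtain rfl := (hinv r b).1 hrb
        simp [hab.symm]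
      · have hra' : r ≠ π.symm a := fun h => hra (by simp [h])
        have hrb' : r ≠ π.symm b := fun h => hrb (by simp [h])
        simp [hra, hrb, horth, Matrix.updateCol_ne hra', Matrix.updateCol_ne hrb']
    rw [hM, Matrix.det_updateCol_updateCol_one (by simpa using hab)]
    simp [hab]

noncomputable def determinantalMeasure (μ : Measure X) (f : ι → X → ℂ) : Measure (ι → X) :=
  (Measure.pi fun _ => μ).withDensity fun x => ENNReal.ofReal
    (((Fintype.card ι).factorial : ℝ)⁻¹ * ‖(Matrix.of fun i j => f j (x i)).det‖ ^ 2)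

theorem determinantalMeasure_restrict {f : ι → X → ℂ}
    {S : Set X} (hS : MeasurableSet S) (hfS : ∀ j, ∀ x ∉ S, f j x = 0) :
    determinantalMeasure (μ.restrict S) f = determinantalMeasure μ f := by
  set ρ : (ι → X) → ENNReal := fun x => ENNReal.ofReal
    (((Fintype.card ι).factorial : ℝ)⁻¹ * ‖(Matrix.of fun i j => f j (x i)).det‖ ^ 2)
  have hT : MeasurableSet (Set.univ.pi fun _ : ι => S) := MeasurableSet.univ_pi fun _ => hS
  have hρ : (Set.univ.pi fun _ : ι => S).indicator ρ = ρ := by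
    refine Set.indicator_eq_self.2 fun x hx => ?_
    by_contra hxS
    obtain ⟨i, -, hi⟩ : ∃ i ∈ Set.univ, x i ∉ S := by simpa [Set.mem_pi] using hxS
    have hdet : (Matrix.of fun i j => f j (x i)).det = 0 :=
      Matrix.det_eq_zero_of_row_eq_zero i fun j => hfS j (x i) hi
    simp [ρ, hdet] at hx
  change (Measure.pi _).withDensity ρ = (Measure.pi _).withDensity ρ
  rw [← hρ, withDensity_indicator hT, withDensity_indicator hT,
    Measure.restrict_univ_pi_pi_restrict (fun _ => μ) fun _ => hS]

theorem integral_determinantalMeasure {f : ι → X → ℂ} (hf : ∀ j, Measurable (f j))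
    (F : (ι → X) → ℂ) :
    ∫ x, F x ∂determinantalMeasure μ f = ((Fintype.card ι).factorial : ℂ)⁻¹ *
      ∫ x, F x * ((Matrix.of fun i j => f j (x i)).det *
        conj (Matrix.of fun i j => f j (x i)).det) ∂(Measure.pi fun _ => μ) := by
  rw [determinantalMeasure, integral_withDensity_eq_integral_toReal_smul
    (((measurable_det_of_apply hf).norm.pow_const 2).const_mul _).ennreal_ofReal
    (ae_of_all _ fun _ => ENNReal.ofReal_lt_top), ← integral_const_mul]
  congr 1 with x
  rw [ENNReal.toReal_ofReal (by positivity), Complex.real_smul, Complex.mul_conj,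
    Complex.normSq_eq_norm_sq]
  push_cast
  ring

theorem integral_sum_apply_determinantalMeasure [SigmaFinite μ] {f : ι → X → ℂ}
    (hfm : ∀ j, Measurable (f j)) (hf : ∀ j, MemLp (f j) 2 μ)
    (horth : weightedGram μ f (fun _ => 1) = 1) {φ : X → ℂ} (hφ : AEStronglyMeasurable φ μ)
    {c : ℝ} (hφc : ∀ y, ‖φ y‖ ≤ c) :
    ∫ x, ∑ i, φ (x i) ∂determinantalMeasure μ f = (weightedGram μ f φ).trace := by
  have hφc' : ∀ y, ‖φ y‖ ≤ max c 1 := fun y => (hφc y).trans (le_max_left _ _)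
  have h1c : ∀ _ : X, ‖(1 : ℂ)‖ ≤ max c 1 := fun _ => by simp
  rw [integral_determinantalMeasure hfm]
  simp only [Finset.sum_mul]
  rw [integral_finsetSum _ fun a _ => by
    simpa using integrable_mul_mul_det_mul_conj hf hφ aestronglyMeasurable_const hφc' h1c a a]
  have key : ∀ a, ∫ x, φ (x a) * ((Matrix.of fun i j => f j (x i)).det *
      conj (Matrix.of fun i j => f j (x i)).det) ∂(Measure.pi fun _ => μ) =
      ∑ π : Equiv.Perm ι, weightedGram μ f φ (π⁻¹ a) (π⁻¹ a) := fun a => by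
    simpa [horth] using integral_mul_mul_det_mul_conj hf horth hφ aestronglyMeasurable_const
      hφc' h1c a a
  simp only [key]
  rw [Finset.sum_sum_perm_inv_apply fun a => weightedGram μ f φ a a,
    inv_mul_cancel_left₀ (Nat.cast_ne_zero.2 (Nat.factorial_ne_zero _))]
  rfl

theorem integral_sum_apply_sq_determinantalMeasure [SigmaFinite μ] {f : ι → X → ℂ}
    (hfm : ∀ j, Measurable (f j)) (hf : ∀ j, MemLp (f j) 2 μ)
    (horth : weightedGram μ f (fun _ => 1) = 1) {φ : X → ℂ} (hφ : AEStronglyMeasurable φ μ)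
    {c : ℝ} (hφc : ∀ y, ‖φ y‖ ≤ c) :
    ∫ x, (∑ i, φ (x i)) ^ 2 ∂determinantalMeasure μ f =
      (weightedGram μ f fun y => φ y * φ y).trace + (weightedGram μ f φ).trace ^ 2 -
        (weightedGram μ f φ * weightedGram μ f φ).trace := by
  rw [integral_determinantalMeasure hfm]
  simp only [sq, Finset.sum_mul_sum]
  simp only [Finset.sum_mul]
  rw [integral_finsetSum _ fun a _ => integrable_finsetSum _ fun b _ =>
    integrable_mul_mul_det_mul_conj hf hφ hφ hφc hφc a b]
  simp only [integral_finsetSum _ fun b _ => integrable_mul_mul_det_mul_conj hf hφ hφ hφc hφc _ b,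
    integral_mul_mul_det_mul_conj hf horth hφ hφ hφc hφc]
  set G := weightedGram μ f φ
  set F : ι → ι → ℂ := fun c d =>
    (if c = d then weightedGram μ f (fun y => φ y * φ y) c c else 0) +
      (G c c * G d d - G d c * G c d)
  have hterm : ∀ (π : Equiv.Perm ι) a b,
      (if a = b then weightedGram μ f (fun y => φ y * φ y) (π⁻¹ a) (π⁻¹ a) else 0) +
        (G (π⁻¹ a) (π⁻¹ a) * G (π⁻¹ b) (π⁻¹ b) - G (π⁻¹ b) (π⁻¹ a) * G (π⁻¹ a) (π⁻¹ b)) =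
      F (π⁻¹ a) (π⁻¹ b) := fun π a b => by simp [F]
  simp only [hterm]
  rw [Finset.sum_sum_sum_perm_inv_apply F,
    inv_mul_cancel_left₀ (Nat.cast_ne_zero.2 (Nat.factorial_ne_zero _))]
  simp only [F, Finset.sum_add_distrib, Finset.sum_sub_distrib, Finset.sum_ite_eq, Finset.mem_univ,
    if_true, Matrix.trace, Matrix.diag, Matrix.mul_apply, Finset.sum_mul_sum]
  rw [add_sub_assoc]
  congr 2
  exact Finset.sum_comm

theorem integral_sq_sub_sq_integral_determinantalMeasure {f : ι → X → ℂ}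
    (hfm : ∀ j, Measurable (f j)) (hf : ∀ j, MemLp (f j) 2 μ)
    (horth : weightedGram μ f (fun _ => 1) = 1) {g : X → ℝ} (hg : Measurable g) {C : ℝ}
    (hgC : ∀ x, |g x| ≤ C) :
    ∫ x, (∑ i, g (x i)) ^ 2 ∂determinantalMeasure μ f -
        (∫ x, ∑ i, g (x i) ∂determinantalMeasure μ f) ^ 2 =
      (1 / 2) * ∫ x, ∫ y, ‖∑ j, f j x * conj (f j y)‖ ^ 2 * (g x - g y) ^ 2 ∂μ ∂μ := by
  obtain ⟨S, hS, hSσ, hfS⟩ := exists_sigmaFinite_restrict_forall_notMem_eq_zero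
    (fun j => (hfm j).stronglyMeasurable) hf two_ne_zero ENNReal.ofNat_ne_top
  have hgram : ∀ w, weightedGram (μ.restrict S) f w = weightedGram μ f w :=
    weightedGram_restrict hfS
  have hfS2 : ∀ j, MemLp (f j) 2 (μ.restrict S) := fun j => (hf j).restrict S
  have horthS : weightedGram (μ.restrict S) f (fun _ => 1) = 1 := by rw [hgram, horth]
  have hgS : AEStronglyMeasurable (fun y => (g y : ℂ)) (μ.restrict S) := by fun_prop
  have hgC' : ∀ y, ‖(g y : ℂ)‖ ≤ C := fun y => by simpa using hgC y
  apply Complex.ofReal_injective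
  push_cast
  rw [integral_integral_normSq_kernel_mul_sub_sq hf horth hg hgC,
    ← determinantalMeasure_restrict hS hfS]
  simp only [← integral_complex_ofReal]
  push_cast
  rw [integral_sum_apply_sq_determinantalMeasure hfm hfS2 horthS hgS hgC',
    integral_sum_apply_determinantalMeasure hfm hfS2 horthS hgS hgC']
  simp only [hgram]
  ring

end

theorem determinantal_variance_linear_statistic_general {X : Type*} [MeasurableSpace X]
    (μ : Measure X) (N : ℕ) (f : Fin N → X → ℂ)
    (hmeas : ∀ j, Measurable (f j))
    (hL2 : ∀ j, MemLp (f j) 2 μ)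
    (horth : ∀ i j, (∫ x, f i x * (starRingEnd ℂ) (f j x) ∂μ) =
      if i = j then 1 else 0)
    (K : X → X → ℂ)
    (hK : ∀ x y, K x y = ∑ j, f j x * (starRingEnd ℂ) (f j y))
    (ν : Measure (Fin N → X))
    (hν : ν = (Measure.pi fun _ : Fin N => μ).withDensity fun x =>
      ENNReal.ofReal ((Nat.factorial N : ℝ)⁻¹ *
        ‖(Matrix.of fun i j : Fin N => f j (x i)).det‖ ^ 2))
    (g : X → ℝ) (hg : Measurable g) (C : ℝ) (hgC : ∀ x, |g x| ≤ C) :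
    (∫ x : Fin N → X, (∑ i, g (x i)) ^ 2 ∂ν) -
        (∫ x : Fin N → X, (∑ i, g (x i)) ∂ν) ^ 2 =
      (1 / 2) * ∫ x, ∫ y, ‖K x y‖ ^ 2 * (g x - g y) ^ 2 ∂μ ∂μ := by
  obtain rfl : K = fun x y => ∑ j, f j x * conj (f j y) := funext fun x => funext (hK x)
  obtain rfl : ν = determinantalMeasure μ f := by
    rw [hν, determinantalMeasure, Fintype.card_fin]
  have horth' : weightedGram μ f (fun _ => 1) = 1 := by
    ext i j
    simpa [weightedGram, Matrix.one_apply] using horth i j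
  exact integral_sq_sub_sq_integral_determinantalMeasure hmeas hL2 horth' hg hgC

/-- Variance of a linear statistic with respect to a determinantal point process:
`Var[∑ i, g (x i)] = (1/2) ∫∫ |K(x,y)|² (g(x) - g(y))² dμ(x) dμ(y)`. -/
theorem determinantal_variance_linear_statistic {X : Type*} [MeasurableSpace X]
    (μ : Measure X) (N : ℕ) (hN : 0 < N) (f : Fin N → X → ℂ)
    (hmeas : ∀ j, Measurable (f j))
    (hL2 : ∀ j, MemLp (f j) 2 μ)
    (horth : ∀ i j, (∫ x, f i x * (starRingEnd ℂ) (f j x) ∂μ) =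
      if i = j then 1 else 0)
    (K : X → X → ℂ)
    (hK : ∀ x y, K x y = ∑ j, f j x * (starRingEnd ℂ) (f j y))
    (ν : Measure (Fin N → X))
    (hν : ν = (Measure.pi fun _ : Fin N => μ).withDensity fun x =>
      ENNReal.ofReal ((Nat.factorial N : ℝ)⁻¹ *
        ‖(Matrix.of fun i j : Fin N => f j (x i)).det‖ ^ 2))
    (g : X → ℝ) (hg : Measurable g) (C : ℝ) (hgC : ∀ x, |g x| ≤ C) :
    (∫ x : Fin N → X, (∑ i, g (x i)) ^ 2 ∂ν) -
        (∫ x : Fin N → X, (∑ i, g (x i)) ∂ν) ^ 2 =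
      (1 / 2) * ∫ x, ∫ y, ‖K x y‖ ^ 2 * (g x - g y) ^ 2 ∂μ ∂μ :=
  determinantal_variance_linear_statistic_general μ N f hmeas hL2 horth K hK ν hν g hg C hgC
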